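/- Let n ≥ 1, x_t, x_s, x_τ, β ∈ ℝⁿ, α ∈ ℝ, σ_i² ≥ 0, and σ_t², σ_s², σ_τ² ≥ 0, with σ_i² + σ_r² > 0 for each r ∈ {t, s, τ}. Let U_r = x_r'β + α + ε_r for r ∈ {t, s, τ}, where ε_t, ε_s, ε_τ are independent with ε_r ~ N(0, σ_i² + σ_r²). Then E[((U_t²U_s − U_s²U_t) + (U_s²U_τ − U_τ²U_s) + (U_τ²U_t − U_t²U_τ) − U_tU_s·(x_t − x_s)'β − U_sU_τ·(x_s − x_τ)'β − U_τU_t·(x_τ − x_t)'β − (U_τ − U_t)·σ_s² − (U_s − U_τ)·σ_t² − (U_t − U_s)·σ_τ²)·1{U_t>0, U_s>0, U_τ>0}] = 0. -/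

import Mathlib

/-!
For a normal density `φ` with mean `μ` and variance `σ²`, `(u² - μu - σ²) φ(u)` is the derivative
of `-σ² u φ(u)`, which vanishes at `0` and at `∞`; hence `E[(U² - μU - σ²) 1{U > 0}] = 0`
(a truncated Stein identity). Writing `kᵣ(u) = u² - mᵣu - (σᵢ² + σᵣ²)`, the integrand of the
moment condition is `k_t(U_t)(U_s - U_τ) + k_s(U_s)(U_τ - U_t) + k_τ(U_τ)(U_t - U_s)`: the `σᵢ²`
terms cancel in the cyclic sum. By independence each of the six resulting products of one-variable
functions factors, and each contains a vanishing factor `E[kᵣ(Uᵣ) 1{Uᵣ > 0}]`.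
-/

open MeasureTheory

/-- Density of the normal distribution `N(μ, σ²)` on `ℝ` (with `σ` the standard deviation). -/
noncomputable def normalPDF (μ σ u : ℝ) : ℝ :=
  (1 / (σ * Real.sqrt (2 * Real.pi))) * Real.exp (-(u - μ) ^ 2 / (2 * σ ^ 2))

open Real Set Filter Topology

theorem hasDerivAt_normalPDF (μ σ u : ℝ) :
    HasDerivAt (normalPDF μ σ) (-((u - μ) / σ ^ 2) * normalPDF μ σ u) u := by
  have h := ((((hasDerivAt_id u).sub_const μ).pow 2).neg.div_const (2 * σ ^ 2)).exp.const_mul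
    (1 / (σ * √(2 * π)))
  refine h.congr_deriv ?_
  simp only [normalPDF, id, Pi.neg_apply, Pi.pow_apply]
  ring

theorem integrable_pow_mul_normalPDF (k : ℕ) (μ : ℝ) {σ : ℝ} (hσ : σ ≠ 0) :
    Integrable (fun u => u ^ k * normalPDF μ σ u) := by
  have hb : 0 < 1 / (2 * σ ^ 2) := by positivity
  have hmon (i : ℕ) : Integrable (fun x : ℝ => x ^ i * exp (-(1 / (2 * σ ^ 2)) * x ^ 2)) := by
    simpa [rpow_natCast] using
      integrable_rpow_mul_exp_neg_mul_sq hb (s := i) (by linarith [i.cast_nonneg (α := ℝ)])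
  have hshift : Integrable (fun x => (x + μ) ^ k * normalPDF μ σ (x + μ)) := by
    simp_rw [add_pow, Finset.sum_mul]
    refine integrable_finsetSum _ fun i _ => ((hmon i).const_mul
      (μ ^ (k - i) * k.choose i / (σ * √(2 * π)))).congr (ae_of_all _ fun x => ?_)
    simp only [normalPDF, add_sub_cancel_right]
    ring_nf
  simpa using hshift.comp_sub_right μ

theorem integrable_sq_sub_mul_sub_mul_normalPDF (μ c : ℝ) {σ : ℝ} (hσ : σ ≠ 0) :
    Integrable (fun u => (u ^ 2 - μ * u - c) * normalPDF μ σ u) := by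
  have h := ((integrable_pow_mul_normalPDF 2 μ hσ).sub
    ((integrable_pow_mul_normalPDF 1 μ hσ).const_mul μ)).sub
    ((integrable_pow_mul_normalPDF 0 μ hσ).const_mul c)
  exact h.congr (ae_of_all _ fun u => by simp only [Pi.sub_apply]; ring)

theorem integral_Ioi_sq_sub_mul_sub_sq_mul_normalPDF (μ : ℝ) {σ : ℝ} (hσ : σ ≠ 0) :
    ∫ u in Ioi 0, (u ^ 2 - μ * u - σ ^ 2) * normalPDF μ σ u = 0 := by
  set F : ℝ → ℝ := fun u => -σ ^ 2 * (u * normalPDF μ σ u)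
  have hF (u : ℝ) : HasDerivAt F ((u ^ 2 - μ * u - σ ^ 2) * normalPDF μ σ u) u := by
    refine (((hasDerivAt_id u).mul (hasDerivAt_normalPDF μ σ u)).const_mul (-σ ^ 2)).congr_deriv ?_
    simp only [id]
    field_simp
    ring
  have hF'int := (integrable_sq_sub_mul_sub_mul_normalPDF μ (σ ^ 2) hσ).integrableOn (s := Ioi 0)
  have hFint : IntegrableOn F (Ioi 0) := by
    simpa [F] using ((integrable_pow_mul_normalPDF 1 μ hσ).const_mul (-σ ^ 2)).integrableOn
  have hlim : Tendsto F atTop (𝓝 0) :=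
    tendsto_zero_of_hasDerivAt_of_integrableOn_Ioi (fun u _ => hF u) hF'int hFint
  rw [integral_Ioi_of_hasDerivAt_of_tendsto' (fun u _ => hF u) hF'int hlim]
  simp [F]

theorem integral_mul_prod_prod {α β γ 𝕜 : Type*} [MeasurableSpace α] [MeasurableSpace β]
    [MeasurableSpace γ] [RCLike 𝕜] {μ : Measure α} {ν : Measure β} {ρ : Measure γ}
    [SFinite μ] [SFinite ν] [SFinite ρ] (f : α → 𝕜) (g : β → 𝕜) (h : γ → 𝕜) :
    ∫ p, f p.1 * (g p.2.1 * h p.2.2) ∂μ.prod (ν.prod ρ)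
      = (∫ x, f x ∂μ) * ((∫ y, g y ∂ν) * ∫ z, h z ∂ρ) := by
  rw [integral_prod_mul f (fun q : β × γ => g q.1 * h q.2), integral_prod_mul]

theorem setIntegral_cyclic_mul_normalPDF_eq_zero (m₁ m₂ m₃ : ℝ) {σ₁ σ₂ σ₃ : ℝ}
    (h₁ : σ₁ ≠ 0) (h₂ : σ₂ ≠ 0) (h₃ : σ₃ ≠ 0) :
    ∫ p in Ioi (0 : ℝ) ×ˢ (Ioi (0 : ℝ) ×ˢ Ioi (0 : ℝ)),
      ((p.1 ^ 2 - m₁ * p.1 - σ₁ ^ 2) * (p.2.1 - p.2.2)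
        + (p.2.1 ^ 2 - m₂ * p.2.1 - σ₂ ^ 2) * (p.2.2 - p.1)
        + (p.2.2 ^ 2 - m₃ * p.2.2 - σ₃ ^ 2) * (p.1 - p.2.1))
      * (normalPDF m₁ σ₁ p.1 * (normalPDF m₂ σ₂ p.2.1 * normalPDF m₃ σ₃ p.2.2)) = 0 := by
  set ν := volume.restrict (Ioi (0 : ℝ))
  have hν : volume.restrict (Ioi (0 : ℝ) ×ˢ (Ioi (0 : ℝ) ×ˢ Ioi (0 : ℝ))) = ν.prod (ν.prod ν) := by
    rw [Measure.volume_eq_prod, ← Measure.prod_restrict, Measure.volume_eq_prod,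
      ← Measure.prod_restrict]
  set K : ℝ → ℝ → ℝ → ℝ := fun m σ u => (u ^ 2 - m * u - σ ^ 2) * normalPDF m σ u
  set M : ℝ → ℝ → ℝ → ℝ := fun m σ u => u * normalPDF m σ u
  have hK {m σ : ℝ} (hσ : σ ≠ 0) : Integrable (K m σ) ν :=
    (integrable_sq_sub_mul_sub_mul_normalPDF m _ hσ).restrict
  have hM {m σ : ℝ} (hσ : σ ≠ 0) : Integrable (M m σ) ν := by
    simpa using (integrable_pow_mul_normalPDF 1 m hσ).restrict
  have hP {m σ : ℝ} (hσ : σ ≠ 0) : Integrable (normalPDF m σ) ν := by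
    simpa using (integrable_pow_mul_normalPDF 0 m hσ).restrict
  have hK_zero {m σ : ℝ} (hσ : σ ≠ 0) : ∫ u, K m σ u ∂ν = 0 :=
    integral_Ioi_sq_sub_mul_sub_sq_mul_normalPDF m hσ
  have hI {f g h : ℝ → ℝ} (hf : Integrable f ν) (hg : Integrable g ν) (hh : Integrable h ν) :
      Integrable (fun p : ℝ × ℝ × ℝ => f p.1 * (g p.2.1 * h p.2.2)) (ν.prod (ν.prod ν)) :=
    hf.mul_prod (hg.mul_prod hh)
  have hexpand : ∀ p : ℝ × ℝ × ℝ,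
      ((p.1 ^ 2 - m₁ * p.1 - σ₁ ^ 2) * (p.2.1 - p.2.2)
        + (p.2.1 ^ 2 - m₂ * p.2.1 - σ₂ ^ 2) * (p.2.2 - p.1)
        + (p.2.2 ^ 2 - m₃ * p.2.2 - σ₃ ^ 2) * (p.1 - p.2.1))
      * (normalPDF m₁ σ₁ p.1 * (normalPDF m₂ σ₂ p.2.1 * normalPDF m₃ σ₃ p.2.2))
      = (K m₁ σ₁ p.1 * (M m₂ σ₂ p.2.1 * normalPDF m₃ σ₃ p.2.2)
          - K m₁ σ₁ p.1 * (normalPDF m₂ σ₂ p.2.1 * M m₃ σ₃ p.2.2))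
        + (normalPDF m₁ σ₁ p.1 * (K m₂ σ₂ p.2.1 * M m₃ σ₃ p.2.2)
          - M m₁ σ₁ p.1 * (K m₂ σ₂ p.2.1 * normalPDF m₃ σ₃ p.2.2))
        + (M m₁ σ₁ p.1 * (normalPDF m₂ σ₂ p.2.1 * K m₃ σ₃ p.2.2)
          - normalPDF m₁ σ₁ p.1 * (M m₂ σ₂ p.2.1 * K m₃ σ₃ p.2.2)) := fun p => by
    simp only [K, M]
    ring
  rw [hν, integral_congr_ae (ae_of_all _ hexpand), integral_add, integral_add,
    integral_sub, integral_sub, integral_sub]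
  · simp only [integral_mul_prod_prod, hK_zero h₁, hK_zero h₂, hK_zero h₃]
    ring
  all_goals
    repeat' first | apply Integrable.add | apply Integrable.sub | apply Integrable.neg | apply hI
  all_goals first | exact hK ‹_› | exact hM ‹_› | exact hP ‹_›

theorem panel_tobit_additive_variance_moment_general (n : ℕ)
    (xt xs xτ β : Fin n → ℝ) (α : ℝ) (σi2 σt2 σs2 στ2 : ℝ)
    (ht : 0 < σi2 + σt2) (hs : 0 < σi2 + σs2) (hτ : 0 < σi2 + στ2) :
    ∫ p in Set.Ioi (0 : ℝ) ×ˢ (Set.Ioi (0 : ℝ) ×ˢ Set.Ioi (0 : ℝ)),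
        ((p.1 ^ 2 * p.2.1 - p.2.1 ^ 2 * p.1)
            + (p.2.1 ^ 2 * p.2.2 - p.2.2 ^ 2 * p.2.1)
            + (p.2.2 ^ 2 * p.1 - p.1 ^ 2 * p.2.2)
            - p.1 * p.2.1 * (∑ i, (xt i - xs i) * β i)
            - p.2.1 * p.2.2 * (∑ i, (xs i - xτ i) * β i)
            - p.2.2 * p.1 * (∑ i, (xτ i - xt i) * β i)
            - (p.2.2 - p.1) * σs2 - (p.2.1 - p.2.2) * σt2 - (p.1 - p.2.1) * στ2)
          * (normalPDF (∑ i, xt i * β i + α) (Real.sqrt (σi2 + σt2)) p.1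
              * (normalPDF (∑ i, xs i * β i + α) (Real.sqrt (σi2 + σs2)) p.2.1
                  * normalPDF (∑ i, xτ i * β i + α) (Real.sqrt (σi2 + στ2)) p.2.2)) = 0 := by
  have hmean (x y : Fin n → ℝ) :
      ∑ i, (x i - y i) * β i = (∑ i, x i * β i + α) - (∑ i, y i * β i + α) := by
    simp only [sub_mul, Finset.sum_sub_distrib]
    ring
  refine (integral_congr_ae (ae_of_all _ fun p => ?_)).trans
    (setIntegral_cyclic_mul_normalPDF_eq_zero
      (∑ i, xt i * β i + α) (∑ i, xs i * β i + α) (∑ i, xτ i * β i + α)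
      (sqrt_pos.2 ht).ne' (sqrt_pos.2 hs).ne' (sqrt_pos.2 hτ).ne')
  simp only [hmean, sq_sqrt ht.le, sq_sqrt hs.le, sq_sqrt hτ.le]
  ring

/-- Moment condition (Estm_h3) for the fixed-effects panel Tobit model with additively
decomposed variance `σ_{ir}² = σ_i² + σ_r²`: with `U_r ~ N(x_r'β + α, σ_i² + σ_r²)`,
`r ∈ {t, s, τ}`, independent, the cyclic sum over three periods eliminates `α` and `σ_i²`:
`E[((U_t²U_s − U_s²U_t) + (U_s²U_τ − U_τ²U_s) + (U_τ²U_t − U_t²U_τ)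
   − U_tU_s(x_t − x_s)'β − U_sU_τ(x_s − x_τ)'β − U_τU_t(x_τ − x_t)'β
   − (U_τ − U_t)σ_s² − (U_s − U_τ)σ_t² − (U_t − U_s)σ_τ²)·1{U_t>0,U_s>0,U_τ>0}] = 0`. -/
theorem panel_tobit_additive_variance_moment (n : ℕ) (hn : 1 ≤ n)
    (xt xs xτ β : Fin n → ℝ) (α : ℝ) (σi2 σt2 σs2 στ2 : ℝ)
    (hσi2 : 0 ≤ σi2) (hσt2 : 0 ≤ σt2) (hσs2 : 0 ≤ σs2) (hστ2 : 0 ≤ στ2)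
    (ht : 0 < σi2 + σt2) (hs : 0 < σi2 + σs2) (hτ : 0 < σi2 + στ2) :
    ∫ p in Set.Ioi (0 : ℝ) ×ˢ (Set.Ioi (0 : ℝ) ×ˢ Set.Ioi (0 : ℝ)),
        ((p.1 ^ 2 * p.2.1 - p.2.1 ^ 2 * p.1)
            + (p.2.1 ^ 2 * p.2.2 - p.2.2 ^ 2 * p.2.1)
            + (p.2.2 ^ 2 * p.1 - p.1 ^ 2 * p.2.2)
            - p.1 * p.2.1 * (∑ i, (xt i - xs i) * β i)
            - p.2.1 * p.2.2 * (∑ i, (xs i - xτ i) * β i)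
            - p.2.2 * p.1 * (∑ i, (xτ i - xt i) * β i)
            - (p.2.2 - p.1) * σs2 - (p.2.1 - p.2.2) * σt2 - (p.1 - p.2.1) * στ2)
          * (normalPDF (∑ i, xt i * β i + α) (Real.sqrt (σi2 + σt2)) p.1
              * (normalPDF (∑ i, xs i * β i + α) (Real.sqrt (σi2 + σs2)) p.2.1
                  * normalPDF (∑ i, xτ i * β i + α) (Real.sqrt (σi2 + στ2)) p.2.2)) = 0 :=
  panel_tobit_additive_variance_moment_general n xt xs xτ β α σi2 σt2 σs2 στ2 ht hs hτ
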